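/- Define c(v) = (1/2)·[((λ₂/√2)^{n-1})·λ₁^{2|v|} + ((λ₁/√2)^{n-1})·λ₂^{2|v|}] for v ∈ ℤ₂ⁿ, with λ₁ = e^{iπ/4}, λ₂ = e^{-iπ/4}. Then Σ_{v ∈ ℤ₂ⁿ, vₙ = 1} c(v) · (((-i)^{|v|} + i^{|v|})/2) = ((√2·λ₁)^{n-1} + (√2·λ₂)^{n-1})/4 for every n ≥ 2. -/

import Mathlib

/-!
Since `λ₁² = i` and `λ₂² = -i`, the summand equals `(A + B)/4 · (1 + (-1)^{|v|})` with
`A = (λ₂/√2)^{n-1}`, `B = (λ₁/√2)^{n-1}`. Splitting off the last coordinate, the weight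
enumerator gives `∑_{vₙ = 1} x^{|v|} = x (1 + x)^{n-1}`, which is `2^{n-1}` at `x = 1` and `0` at
`x = -1` for `n ≥ 2`; finally `2^{n-1} (λ/√2)^{n-1} = (√2 λ)^{n-1}`.
-/

open Complex Finset

theorem sum_pow_sum_val {R : Type*} [CommSemiring R] (m : ℕ) (x : R) :
    ∑ v : Fin m → Fin 2, x ^ (∑ i, (v i : ℕ)) = (1 + x) ^ m := by
  simp_rw [← prod_pow_eq_pow_sum]
  rw [← Fintype.piFinset_univ,
    ← prod_univ_sum (t := fun _ : Fin m => (univ : Finset (Fin 2)))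
      (f := fun _ j => x ^ (j : ℕ))]
  simp [Fin.sum_univ_succ]

theorem sum_filter_last_eq_one_pow_sum_val {R : Type*} [CommSemiring R] (m : ℕ) (x : R) :
    ∑ v ∈ univ.filter (fun v : Fin (m + 1) → Fin 2 => v (Fin.last m) = 1),
      x ^ (∑ i, (v i : ℕ)) = x * (1 + x) ^ m := by
  rw [sum_filter, ← (Fin.snocEquiv fun _ => Fin 2).sum_comp, Fintype.sum_prod_type,
    Fin.sum_univ_two]
  simp [Fin.sum_univ_castSucc, pow_succ', ← mul_sum, sum_pow_sum_val]

theorem one_add_I_div_sqrt_two_sq : ((1 + I) / (Real.sqrt 2 : ℂ)) ^ 2 = I := by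
  rw [div_pow, ← ofReal_pow, Real.sq_sqrt zero_le_two]
  ring_nf; simp

theorem one_sub_I_div_sqrt_two_sq : ((1 - I) / (Real.sqrt 2 : ℂ)) ^ 2 = -I := by
  rw [div_pow, ← ofReal_pow, Real.sq_sqrt zero_le_two]
  ring_nf; simp

theorem two_pow_mul_div_sqrt_two_pow (m : ℕ) (z : ℂ) :
    2 ^ m * (z / (Real.sqrt 2 : ℂ)) ^ m = ((Real.sqrt 2 : ℂ) * z) ^ m := by
  have h : ((Real.sqrt 2 : ℝ) : ℂ) ^ 2 = 2 := by
    rw [← ofReal_pow, Real.sq_sqrt zero_le_two]; norm_num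
  rw [← mul_pow]
  congr 1
  have : ((Real.sqrt 2 : ℝ) : ℂ) ≠ 0 := by exact_mod_cast (by positivity : Real.sqrt 2 ≠ 0)
  field_simp
  rw [h, mul_comm]

theorem I_pow_combination_mul_avg (A B : ℂ) (k : ℕ) :
    1 / 2 * (A * I ^ k + B * (-I) ^ k) * (((-I) ^ k + I ^ k) / 2) =
      (A + B) / 4 * (1 ^ k + (-1) ^ k) := by
  have h1 : I ^ k * (-I) ^ k = 1 := by rw [← mul_pow]; simp
  have h2 : I ^ k * I ^ k = (-1) ^ k := by rw [← mul_pow, I_mul_I]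
  have h3 : (-I) ^ k * (-I) ^ k = (-1) ^ k := by rw [← mul_pow]; simp
  rw [one_pow]
  linear_combination (A + B) / 4 * h1 + A / 4 * h2 + B / 4 * h3

/-- With `c(v) = (1/2)[(λ₂/√2)^{n-1} λ₁^{2|v|} + (λ₁/√2)^{n-1} λ₂^{2|v|}]`,
the sum of `c(v)·((-i)^{|v|}+i^{|v|})/2` over all `v ∈ ℤ₂ⁿ` with last coordinate `1`
equals `((√2 λ₁)^{n-1} + (√2 λ₂)^{n-1})/4`, for every `n ≥ 2`. -/
theorem stmt9 (n : ℕ) (hn : 2 ≤ n) :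
    let lam1 : ℂ := (1 + I) / (Real.sqrt 2 : ℂ)
    let lam2 : ℂ := (1 - I) / (Real.sqrt 2 : ℂ)
    let c : (Fin n → Fin 2) → ℂ := fun v =>
      (1 / 2) * ((lam2 / (Real.sqrt 2 : ℂ)) ^ (n - 1) * lam1 ^ (2 * ∑ i, (v i : ℕ)) +
        (lam1 / (Real.sqrt 2 : ℂ)) ^ (n - 1) * lam2 ^ (2 * ∑ i, (v i : ℕ)))
    ∑ v ∈ Finset.univ.filter (fun v : Fin n → Fin 2 => v ⟨n - 1, by omega⟩ = 1),
        c v * (((-I) ^ (∑ i, (v i : ℕ)) + I ^ (∑ i, (v i : ℕ))) / 2) =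
      (((Real.sqrt 2 : ℂ) * lam1) ^ (n - 1) + ((Real.sqrt 2 : ℂ) * lam2) ^ (n - 1)) / 4 := by
  intro lam1 lam2 c
  obtain ⟨m, rfl⟩ : ∃ m, n = m + 1 := ⟨n - 1, by omega⟩
  have last_eq : (⟨m + 1 - 1, by omega⟩ : Fin (m + 1)) = Fin.last m := Fin.ext (by simp)
  have lam1_sq : lam1 ^ 2 = I := one_add_I_div_sqrt_two_sq
  have lam2_sq : lam2 ^ 2 = -I := one_sub_I_div_sqrt_two_sq
  rw [last_eq]
  simp only [c, Nat.add_sub_cancel, pow_mul, lam1_sq, lam2_sq, I_pow_combination_mul_avg,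
    ← mul_sum, sum_add_distrib, sum_filter_last_eq_one_pow_sum_val]
  rw [add_neg_cancel, zero_pow (by omega), ← two_pow_mul_div_sqrt_two_pow m lam1,
    ← two_pow_mul_div_sqrt_two_pow m lam2]
  ring
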